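/- For the 6-stage explicit Runge–Kutta method (A, b, c) from equation (7) of the paper, there exists a nonzero rational g such that b^T (c · A² c) = 1/30 + g and b^T A (c · A c) = 1/40 − g, where the products in parentheses are componentwise. -/

import Mathlib

open scoped BigOperators

/-- Abscissae of the method (7) of the paper. -/
noncomputable def cRK : Fin 6 → ℝ := ![0, 1/4, 1/2, 3/4, 3/10, 1]

/-- Weights of the method (7) of the paper. -/
noncomputable def bRK : Fin 6 → ℝ := ![5/54, 0, 0, 32/81, 250/567, 1/14]

/-- Coefficient matrix of the method (7) of the paper. -/
noncomputable def ARK : Matrix (Fin 6) (Fin 6) ℝ :=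
  !![0, 0, 0, 0, 0, 0;
     1/4, 0, 0, 0, 0, 0;
     -1/2, 1, 0, 0, 0, 0;
     3/16, 0, 9/16, 0, 0, 0;
     291/2500, 108/625, 63/2500, -9/625, 0, 0;
     -146/135, 152/15, -7/15, 428/405, -700/81, 0]

/-!
Both fifth-order conditions fail, only their sum `1/30 + 1/40` holds: evaluating the stage
vectors `Ac`, `A²c` and `A(c ⊙ Ac)` exactly gives `bᵀ(c ⊙ A²c) = 13/480` and
`bᵀA(c ⊙ Ac) = 1/32`, so `g = -1/160`.
-/

open Matrix

section
variable {l m n R : Type*} [Fintype l] [Fintype m] [Fintype n] [CommSemiring R]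

theorem Matrix.dotProduct_mul_mulVec_mulVec (b c : l → R) (A : Matrix l m R) (B : Matrix m n R)
    (v : n → R) :
    b ⬝ᵥ (c * (A *ᵥ (B *ᵥ v))) = ∑ i, ∑ j, ∑ k, b i * c i * A i j * B j k * v k := by
  simp only [dotProduct, mulVec, Pi.mul_apply, Finset.mul_sum, mul_assoc]

theorem Matrix.dotProduct_mulVec_mul_mulVec (b : l → R) (A : Matrix l m R) (c : m → R)
    (B : Matrix m n R) (v : n → R) :
    b ⬝ᵥ (A *ᵥ (c * (B *ᵥ v))) = ∑ i, ∑ j, ∑ k, b i * A i j * c j * B j k * v k := by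
  simp only [dotProduct, mulVec, Pi.mul_apply, Finset.mul_sum, mul_assoc]

end

theorem ARK_mulVec_cRK : ARK *ᵥ cRK = ![0, 0, 1/4, 9/32, 9/200, 1/2] := by
  ext i
  fin_cases i <;> simp [ARK, cRK, mulVec, dotProduct, Fin.sum_univ_six] <;> norm_num

theorem ARK_mulVec_ARK_mulVec_cRK : ARK *ᵥ (ARK *ᵥ cRK) = ![0, 0, 0, 9/64, 9/4000, -5/24] := by
  rw [ARK_mulVec_cRK]
  ext i
  fin_cases i <;> simp [ARK, mulVec, dotProduct, Fin.sum_univ_six] <;> norm_num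

theorem ARK_mulVec_cRK_mul_ARK_mulVec_cRK :
    ARK *ᵥ (cRK * (ARK *ᵥ cRK)) = ![0, 0, 0, 9/128, 9/80000, 23/480] := by
  rw [ARK_mulVec_cRK]
  ext i
  fin_cases i <;> simp [ARK, cRK, mulVec, dotProduct, Fin.sum_univ_six] <;> norm_num

/-- For the method (7) of the paper, there is a nonzero rational g with
bᵀ(c ⊙ A²c) = 1/30 + g and bᵀA(c ⊙ Ac) = 1/40 − g. -/
theorem method7_ambiguous_g :
    ∃ g : ℚ, g ≠ 0 ∧
      (∑ i, ∑ j, ∑ k, bRK i * cRK i * ARK i j * ARK j k * cRK k = 1/30 + (g : ℝ)) ∧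
      (∑ i, ∑ j, ∑ k, bRK i * ARK i j * cRK j * ARK j k * cRK k = 1/40 - (g : ℝ)) := by
  refine ⟨-1/160, by norm_num, ?_, ?_⟩
  · rw [← dotProduct_mul_mulVec_mulVec, ARK_mulVec_ARK_mulVec_cRK]
    simp [bRK, cRK, dotProduct, Fin.sum_univ_six]
    norm_num
  · rw [← dotProduct_mulVec_mul_mulVec, ARK_mulVec_cRK_mul_ARK_mulVec_cRK]
    simp [bRK, dotProduct, Fin.sum_univ_six]
    norm_num
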